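/- arXiv:2502.11146 — 3 statements merged into one kernel-verified Lean document; each statement's English description precedes it below -/
import Mathlib

section
/- Let A be a Frobenius category with ω its subcategory of projectives, and let I be an ideal of A with ω ⊆ Ob(I). Then I is a special precovering ideal in A if and only if I/ω is a special precovering ideal in the triangulated stable category A/ω. -/
open CategoryTheory CategoryTheory.Limits

universe w v u

variable {C : Type u} [Category.{v} C] [Preadditive C]

/-- A class of morphisms in a category. -/
abbrev MorClass (C : Type u) [Category.{v} C] : Type _ :=
  ∀ ⦃X Y : C⦄, (X ⟶ Y) → Prop

/-- An ideal of a preadditive category: an additive subbifunctor of `Hom`,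
i.e. for each pair of objects a subgroup of morphisms, closed under two-sided
composition with arbitrary morphisms. -/
structure CatIdeal (C : Type u) [Category.{v} C] [Preadditive C] where
  carrier : MorClass C
  zero_mem : ∀ (X Y : C), carrier (0 : X ⟶ Y)
  add_mem : ∀ ⦃X Y : C⦄ ⦃f g : X ⟶ Y⦄, carrier f → carrier g → carrier (f + g)
  neg_mem : ∀ ⦃X Y : C⦄ ⦃f : X ⟶ Y⦄, carrier f → carrier (-f)
  comp_left_mem : ∀ ⦃W X Y : C⦄ (e : W ⟶ X) ⦃f : X ⟶ Y⦄, carrier f → carrier (e ≫ f)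
  comp_right_mem : ∀ ⦃X Y Z : C⦄ ⦃f : X ⟶ Y⦄ (e : Y ⟶ Z), carrier f → carrier (f ≫ e)

/-- An exact structure on a preadditive category: a distinguished class of
kernel-cokernel pairs ("conflations"). -/
structure ExactStructure (C : Type u) [Category.{v} C] [Preadditive C] where
  IsConflation : ∀ ⦃X Y Z : C⦄, (X ⟶ Y) → (Y ⟶ Z) → Prop
  comp_zero : ∀ ⦃X Y Z : C⦄ ⦃i : X ⟶ Y⦄ ⦃p : Y ⟶ Z⦄, IsConflation i p → i ≫ p = 0
  isKernel : ∀ ⦃X Y Z : C⦄ ⦃i : X ⟶ Y⦄ ⦃p : Y ⟶ Z⦄, IsConflation i p →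
      ∀ ⦃W : C⦄ (g : W ⟶ Y), g ≫ p = 0 → ∃! h : W ⟶ X, h ≫ i = g
  isCokernel : ∀ ⦃X Y Z : C⦄ ⦃i : X ⟶ Y⦄ ⦃p : Y ⟶ Z⦄, IsConflation i p →
      ∀ ⦃W : C⦄ (g : Y ⟶ W), i ≫ g = 0 → ∃! h : Z ⟶ W, p ≫ h = g

namespace ExactStructure

variable (E : ExactStructure C)

/-- A deflation (admissible epimorphism). -/
def Deflation {Y Z : C} (p : Y ⟶ Z) : Prop := ∃ (X : C) (i : X ⟶ Y), E.IsConflation i p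

/-- An inflation (admissible monomorphism). -/
def Inflation {X Y : C} (i : X ⟶ Y) : Prop := ∃ (Z : C) (p : Y ⟶ Z), E.IsConflation i p

/-- Projective object relative to the exact structure. -/
def Projective (P : C) : Prop :=
  ∀ ⦃Y Z : C⦄ (p : Y ⟶ Z), E.Deflation p → ∀ f : P ⟶ Z, ∃ g : P ⟶ Y, g ≫ p = f

/-- Injective object relative to the exact structure. -/
def Injective (Q : C) : Prop :=
  ∀ ⦃X Y : C⦄ (i : X ⟶ Y), E.Inflation i → ∀ f : X ⟶ Q, ∃ g : Y ⟶ Q, i ≫ g = f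

/-- Ext-orthogonality of morphisms `a : A₀ ⟶ A₁` and `b : B₀ ⟶ B₁`:
`Ext(a,b) : Ext(A₁,B₀) → Ext(A₀,B₁)` is zero.  Elementwise: whenever a
conflation `B₀ ↣ W ↠ A₀` maps to a conflation `B₀ ↣ Z ↠ A₁` by a morphism
of conflations of the form `(𝟙, g, a)` (so that the first is the pullback of
the second along `a`), the pushout along `b` splits, i.e. `b` extends over
the inflation `B₀ ↣ W`. -/
def ExtOrth {A₀ A₁ B₀ B₁ : C} (a : A₀ ⟶ A₁) (b : B₀ ⟶ B₁) : Prop :=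
  ∀ ⦃Z W : C⦄ (i : B₀ ⟶ Z) (p : Z ⟶ A₁) (i' : B₀ ⟶ W) (p' : W ⟶ A₀) (g : W ⟶ Z),
    E.IsConflation i p → E.IsConflation i' p' → i' ≫ g = i → p' ≫ a = g ≫ p →
    ∃ u : W ⟶ B₁, i' ≫ u = b

/-- The right Ext-orthogonal class of a class of morphisms. -/
def rightOrth (S : MorClass C) : MorClass C :=
  fun _ _ b => ∀ ⦃A₀ A₁ : C⦄ (a : A₀ ⟶ A₁), S a → E.ExtOrth a b

/-- The left Ext-orthogonal class of a class of morphisms. -/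
def leftOrth (S : MorClass C) : MorClass C :=
  fun _ _ a => ∀ ⦃B₀ B₁ : C⦄ (b : B₀ ⟶ B₁), S b → E.ExtOrth a b

/-- `Ext¹(X,Y) = 0` for objects: every conflation `Y ↣ Z ↠ X` splits. -/
def ExtVanish (X Y : C) : Prop :=
  ∀ ⦃Z : C⦄ (i : Y ⟶ Z) (p : Z ⟶ X), E.IsConflation i p → ∃ r : Z ⟶ Y, i ≫ r = 𝟙 Y

end ExactStructure

section Approximations

variable (S : MorClass C)

/-- `f : A ⟶ X` is an `S`-precover of `X`. -/
def IsPrecover {A X : C} (f : A ⟶ X) : Prop :=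
  S f ∧ ∀ ⦃A' : C⦄ (f' : A' ⟶ X), S f' → ∃ h : A' ⟶ A, h ≫ f = f'

/-- `S` is a precovering class of morphisms. -/
def Precovering : Prop := ∀ X : C, ∃ (A : C) (f : A ⟶ X), IsPrecover S f

/-- `f : X ⟶ B` is an `S`-preenvelope of `X`. -/
def IsPreenvelope {X B : C} (f : X ⟶ B) : Prop :=
  S f ∧ ∀ ⦃B' : C⦄ (f' : X ⟶ B'), S f' → ∃ h : B ⟶ B', f ≫ h = f'

/-- `S` is a preenveloping class of morphisms. -/
def Preenveloping : Prop := ∀ X : C, ∃ (B : C) (f : X ⟶ B), IsPreenvelope S f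

end Approximations

namespace ExactStructure

variable (E : ExactStructure C) (S : MorClass C)

/-- A special `S`-precover in an exact category: a deflation `f : A ↠ X` in `S`
which is an `S`-precover fitting in a pushout diagram of conflations
`K ↣ A' ↠ X` over `K' ↣ A ↠ X` with connecting morphism `g : K ⟶ K'`
right Ext-orthogonal to `S`. -/
def IsSpecialPrecover {A X : C} (f : A ⟶ X) : Prop :=
  IsPrecover S f ∧
  ∃ (K A' K' : C) (i₁ : K ⟶ A') (p₁ : A' ⟶ X) (i₂ : K' ⟶ A) (g : K ⟶ K') (h : A' ⟶ A),
    E.IsConflation i₁ p₁ ∧ E.IsConflation i₂ f ∧ i₁ ≫ h = g ≫ i₂ ∧ h ≫ f = p₁ ∧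
    E.rightOrth S g

def SpecialPrecovering : Prop := ∀ X : C, ∃ (A : C) (f : A ⟶ X), E.IsSpecialPrecover S f

/-- A special `S`-preenvelope in an exact category (dual notion). -/
def IsSpecialPreenvelope {X B : C} (j : X ⟶ B) : Prop :=
  IsPreenvelope S j ∧
  ∃ (V Z W : C) (q : B ⟶ V) (z : X ⟶ Z) (w : Z ⟶ W) (t : B ⟶ Z) (h : V ⟶ W),
    E.IsConflation j q ∧ E.IsConflation z w ∧ j ≫ t = z ∧ t ≫ w = q ≫ h ∧
    E.leftOrth S h

def SpecialPreenveloping : Prop := ∀ X : C, ∃ (B : C) (j : X ⟶ B), E.IsSpecialPreenvelope S j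

/-- An ideal cotorsion pair (on the level of morphism classes). -/
def IdealCotorsionPair (I J : MorClass C) : Prop :=
  I = E.leftOrth J ∧ J = E.rightOrth I

/-- A complete ideal cotorsion pair in an exact category. -/
def CompleteIdealCotorsionPair (I J : MorClass C) : Prop :=
  E.IdealCotorsionPair I J ∧ E.SpecialPrecovering I ∧ E.SpecialPreenveloping J

/-- A cotorsion pair of classes of objects. -/
def ObjCotorsionPair (𝒳 𝒴 : C → Prop) : Prop :=
  (∀ A : C, 𝒳 A ↔ ∀ B : C, 𝒴 B → E.ExtVanish A B) ∧
  (∀ B : C, 𝒴 B ↔ ∀ A : C, 𝒳 A → E.ExtVanish A B)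

/-- A complete cotorsion pair of classes of objects. -/
def CompleteObjCotorsionPair (𝒳 𝒴 : C → Prop) : Prop :=
  E.ObjCotorsionPair 𝒳 𝒴 ∧
  ∀ M : C,
    (∃ (Ym Xm : C) (i : Ym ⟶ Xm) (p : Xm ⟶ M), E.IsConflation i p ∧ 𝒳 Xm ∧ 𝒴 Ym) ∧
    (∃ (Ym Xm : C) (i : M ⟶ Ym) (p : Ym ⟶ Xm), E.IsConflation i p ∧ 𝒴 Ym ∧ 𝒳 Xm)

end ExactStructure

/-- A Frobenius category: an exact category with enough projectives and enough
injectives in which the projective and the injective objects coincide. -/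
structure FrobeniusCat (C : Type u) [Category.{v} C] [Preadditive C] extends ExactStructure C where
  enough_projectives : ∀ X : C, ∃ (P : C) (p : P ⟶ X),
    toExactStructure.Projective P ∧ toExactStructure.Deflation p
  enough_injectives : ∀ X : C, ∃ (Q : C) (i : X ⟶ Q),
    toExactStructure.Injective Q ∧ toExactStructure.Inflation i
  projective_iff_injective : ∀ X : C, toExactStructure.Projective X ↔ toExactStructure.Injective X

namespace FrobeniusCat

variable (F : FrobeniusCat C)

/-- `f` factors through a projective object. -/
def FactorsThruProj {X Y : C} (f : X ⟶ Y) : Prop :=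
  ∃ (P : C) (u : X ⟶ P) (v : P ⟶ Y), F.toExactStructure.Projective P ∧ u ≫ v = f

/-- Two parallel morphisms become equal in the stable category `A/ω`. -/
def StEq {X Y : C} (f g : X ⟶ Y) : Prop := F.FactorsThruProj (f - g)

/-- `e` becomes an isomorphism in the stable category. -/
def StIso {X Y : C} (e : X ⟶ Y) : Prop :=
  ∃ e' : Y ⟶ X, F.StEq (e ≫ e') (𝟙 X) ∧ F.StEq (e' ≫ e) (𝟙 Y)

/-- The image `S/ω` of a class of morphisms in the stable category, described by
representatives: `f` lies in `S/ω` iff it is stably equal to a member of `S`. -/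
def stImage (S : MorClass C) : MorClass C := fun X Y f => ∃ g : X ⟶ Y, S g ∧ F.StEq f g

/-- Left orthogonality `f ⊥ g` in the triangulated stable category `A/ω`:
for every model of the suspension functor on `g` (given by conflations into
projective-injective objects) and every `φ : A ⟶ B[1]`, the composite
`g[1] ∘ φ ∘ f` vanishes in `A/ω`. -/
def StOrth {X A B Y : C} (f : X ⟶ A) (g : B ⟶ Y) : Prop :=
  ∀ ⦃P B' Q Y' : C⦄ (αB : B ⟶ P) (βB : P ⟶ B') (αY : Y ⟶ Q) (βY : Q ⟶ Y')
    (g' : B' ⟶ Y') (ι : P ⟶ Q),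
    F.toExactStructure.Projective P → F.toExactStructure.Projective Q →
    F.toExactStructure.IsConflation αB βB → F.toExactStructure.IsConflation αY βY →
    αB ≫ ι = g ≫ αY → ι ≫ βY = βB ≫ g' →
    ∀ φ : A ⟶ B', F.FactorsThruProj (f ≫ φ ≫ g')

/-- The right orthogonal class in the stable category. -/
def stRightOrth (S : MorClass C) : MorClass C :=
  fun _ _ b => ∀ ⦃A₀ A₁ : C⦄ (a : A₀ ⟶ A₁), S a → F.StOrth a b

/-- The left orthogonal class in the stable category. -/
def stLeftOrth (S : MorClass C) : MorClass C :=
  fun _ _ a => ∀ ⦃B₀ B₁ : C⦄ (b : B₀ ⟶ B₁), S b → F.StOrth a b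

/-- An `S`-precover in the stable category `A/ω` (objects of `A/ω` are those
of `A`, morphisms are represented by morphisms of `A`). -/
def StIsPrecover (S : MorClass C) {A X : C} (f : A ⟶ X) : Prop :=
  S f ∧ ∀ ⦃A' : C⦄ (f' : A' ⟶ X), S f' → ∃ h : A' ⟶ A, F.StEq (h ≫ f) f'

def StPrecovering (S : MorClass C) : Prop := ∀ X : C, ∃ (A : C) (f : A ⟶ X), F.StIsPrecover S f

def StIsPreenvelope (S : MorClass C) {X B : C} (f : X ⟶ B) : Prop :=
  S f ∧ ∀ ⦃B' : C⦄ (f' : X ⟶ B'), S f' → ∃ h : B ⟶ B', F.StEq (f ≫ h) f'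

def StPreenveloping (S : MorClass C) : Prop := ∀ X : C, ∃ (B : C) (f : X ⟶ B), F.StIsPreenvelope S f

/-- A special `S`-precover in the triangulated stable category `A/ω`:
a homotopy pushout diagram of distinguished triangles over `i` whose connecting
morphism `j` lies in `S^⊥`.  Distinguished triangles in `A/ω` are, up to stable
isomorphism, induced by conflations of `A`; accordingly the diagram is encoded by
a morphism of conflations `(j, t, 𝟙)` in `A` together with a stable isomorphism
`e` identifying the second row with (the triangle of) `i`. -/
def StIsSpecialPrecover (S : MorClass C) {X A : C} (i : X ⟶ A) : Prop :=
  F.StIsPrecover S i ∧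
  ∃ (Y Z B X₀ : C) (y : Y ⟶ Z) (z : Z ⟶ A) (b : B ⟶ X₀) (x : X₀ ⟶ A)
    (j : Y ⟶ B) (t : Z ⟶ X₀) (e : X₀ ⟶ X),
    F.toExactStructure.IsConflation y z ∧ F.toExactStructure.IsConflation b x ∧
    y ≫ t = j ≫ b ∧ t ≫ x = z ∧ F.StIso e ∧ F.StEq x (e ≫ i) ∧
    F.stRightOrth S j

def StSpecialPrecovering (S : MorClass C) : Prop :=
  ∀ A : C, ∃ (X : C) (i : X ⟶ A), F.StIsSpecialPrecover S i

/-- A special `S`-preenvelope in the triangulated stable category `A/ω`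
(dual to `StIsSpecialPrecover`): a homotopy pullback diagram with connecting
morphism `h` in `^⊥S`. -/
def StIsSpecialPreenvelope (S : MorClass C) {X B : C} (j : X ⟶ B) : Prop :=
  F.StIsPreenvelope S j ∧
  ∃ (B₀ V Z W : C) (b : X ⟶ B₀) (q : B₀ ⟶ V) (z : X ⟶ Z) (w : Z ⟶ W)
    (t : B₀ ⟶ Z) (h : V ⟶ W) (e : B₀ ⟶ B),
    F.toExactStructure.IsConflation b q ∧ F.toExactStructure.IsConflation z w ∧
    b ≫ t = z ∧ t ≫ w = q ≫ h ∧ F.StIso e ∧ F.StEq (b ≫ e) j ∧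
    F.stLeftOrth S h

def StSpecialPreenveloping (S : MorClass C) : Prop :=
  ∀ X : C, ∃ (B : C) (j : X ⟶ B), F.StIsSpecialPreenvelope S j

/-- An ideal cotorsion pair in the stable category (classes given by
representatives in `A`). -/
def StIdealCotorsionPair (I J : MorClass C) : Prop :=
  I = F.stLeftOrth J ∧ J = F.stRightOrth I

/-- A complete ideal cotorsion pair in the stable category. -/
def StCompleteIdealCotorsionPair (I J : MorClass C) : Prop :=
  F.StIdealCotorsionPair I J ∧ F.StSpecialPrecovering I ∧ F.StSpecialPreenveloping J

end FrobeniusCat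

section AuxProof

variable (F : FrobeniusCat C)

lemma aux_conf_mono {X Y Z : C} {i : X ⟶ Y} {p : Y ⟶ Z}
    (h : F.toExactStructure.IsConflation i p) {W : C} {a b : W ⟶ X}
    (hab : a ≫ i = b ≫ i) : a = b := by
  obtain ⟨u, -, huniq⟩ := F.toExactStructure.isKernel h (a ≫ i)
    (by rw [Category.assoc, F.toExactStructure.comp_zero h, comp_zero])
  exact (huniq a rfl).trans (huniq b hab.symm).symm

lemma aux_conf_epi {X Y Z : C} {i : X ⟶ Y} {p : Y ⟶ Z}
    (h : F.toExactStructure.IsConflation i p) {W : C} {a b : Z ⟶ W}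
    (hab : p ≫ a = p ≫ b) : a = b := by
  obtain ⟨u, -, huniq⟩ := F.toExactStructure.isCokernel h (p ≫ a)
    (by rw [← Category.assoc, F.toExactStructure.comp_zero h, zero_comp])
  exact (huniq a rfl).trans (huniq b hab.symm).symm

lemma aux_ftp_zero (X Y : C) : F.FactorsThruProj (0 : X ⟶ Y) := by
  obtain ⟨P, p, hP, -⟩ := F.enough_projectives X
  exact ⟨P, 0, 0, hP, by simp⟩

lemma aux_ftp_neg {X Y : C} {f : X ⟶ Y} (h : F.FactorsThruProj f) :
    F.FactorsThruProj (-f) := by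
  obtain ⟨P, u, v, hP, huv⟩ := h
  exact ⟨P, u, -v, hP, by rw [Preadditive.comp_neg, huv]⟩

lemma aux_ftp_comp_left {X Y Z : C} (e : X ⟶ Y) {f : Y ⟶ Z} (h : F.FactorsThruProj f) :
    F.FactorsThruProj (e ≫ f) := by
  obtain ⟨P, u, v, hP, huv⟩ := h
  exact ⟨P, e ≫ u, v, hP, by rw [Category.assoc, huv]⟩

lemma aux_ftp_comp_right {X Y Z : C} {f : X ⟶ Y} (e : Y ⟶ Z) (h : F.FactorsThruProj f) :
    F.FactorsThruProj (f ≫ e) := by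
  obtain ⟨P, u, v, hP, huv⟩ := h
  exact ⟨P, u, v ≫ e, hP, by rw [← Category.assoc, huv]⟩

lemma aux_ftp_ext {X Y Q : C} {κ : X ⟶ Q} (hQ : F.toExactStructure.Injective Q)
    (hκ : F.toExactStructure.Inflation κ) {f : X ⟶ Y} (h : F.FactorsThruProj f) :
    ∃ s : Q ⟶ Y, κ ≫ s = f := by
  obtain ⟨P, u, v, hP, huv⟩ := h
  obtain ⟨u', hu'⟩ := ((F.projective_iff_injective P).mp hP) κ hκ u
  exact ⟨u' ≫ v, by rw [← Category.assoc, hu', huv]⟩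

lemma aux_ftp_add {X Y : C} {f g : X ⟶ Y} (hf : F.FactorsThruProj f)
    (hg : F.FactorsThruProj g) : F.FactorsThruProj (f + g) := by
  obtain ⟨Q, κ, hQ, hκ⟩ := F.enough_injectives X
  obtain ⟨s, hs⟩ := aux_ftp_ext F hQ hκ hf
  obtain ⟨s', hs'⟩ := aux_ftp_ext F hQ hκ hg
  exact ⟨Q, κ, s + s', (F.projective_iff_injective Q).mpr hQ,
    by rw [Preadditive.comp_add, hs, hs']⟩

lemma aux_ftp_mem (I : CatIdeal C)
    (hω : ∀ P : C, F.toExactStructure.Projective P → I.carrier (𝟙 P))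
    {X Y : C} {f : X ⟶ Y} (h : F.FactorsThruProj f) : I.carrier f := by
  obtain ⟨P, u, v, hP, huv⟩ := h
  have h1 := I.comp_left_mem u (I.comp_right_mem v (hω P hP))
  simpa [huv] using h1

lemma aux_ftp_lift {W A X₀ : C} {δ : W ⟶ A} (hδ : F.FactorsThruProj δ)
    {x : X₀ ⟶ A} (hx : F.toExactStructure.Deflation x) : ∃ w : W ⟶ X₀, w ≫ x = δ := by
  obtain ⟨P, u, v, hP, huv⟩ := hδ
  obtain ⟨w', hw'⟩ := hP x hx v
  exact ⟨u ≫ w', by rw [Category.assoc, hw', huv]⟩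

end AuxProof
section OrthProof

variable (F : FrobeniusCat C)

/-- Forward direction: the canonical connecting morphism of an exact `I`-precover
which is a deflation is right-orthogonal to `I/ω` in the stable category. -/
lemma aux_forward_orth (I : CatIdeal C)
    {K' A₀ A : C} {i₂ : K' ⟶ A₀} {f : A₀ ⟶ A}
    (hconf : F.toExactStructure.IsConflation i₂ f)
    (hpre : IsPrecover I.carrier f)
    {Ω P : C} {k : Ω ⟶ P} {π : P ⟶ A}
    (hconfπ : F.toExactStructure.IsConflation k π)
    (hP : F.toExactStructure.Projective P)
    {t : P ⟶ A₀} (ht : t ≫ f = π)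
    {c : Ω ⟶ K'} (hc : c ≫ i₂ = k ≫ t) :
    F.stRightOrth (F.stImage I.carrier) c := by
  intro A₀' A₁ a ha
  intro P' B'' Q' Y'' αB βB αY βY c' ι hP' hQ' hcB hcY hsq1 hsq2 φ
  obtain ⟨a₀, ha₀, hst⟩ := ha
  -- comparison of the two suspension models of Ω
  obtain ⟨s, hs⟩ := ((F.projective_iff_injective P).mp hP) αB ⟨B'', βB, hcB⟩ k
  obtain ⟨σ, hσ, -⟩ := F.toExactStructure.isCokernel hcB (s ≫ π)
    (by rw [← Category.assoc, hs, F.toExactStructure.comp_zero hconfπ])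
  -- the connecting morphism γ : A ⟶ Y''
  obtain ⟨m, hm⟩ := ((F.projective_iff_injective Q').mp hQ') i₂ ⟨A, f, hconf⟩ αY
  obtain ⟨γ, hγ, -⟩ := F.toExactStructure.isCokernel hconf (m ≫ βY)
    (by rw [← Category.assoc, hm, F.toExactStructure.comp_zero hcY])
  -- the two models of Σc agree up to stable equality
  obtain ⟨d, hd, -⟩ := F.toExactStructure.isCokernel hcB (ι - s ≫ t ≫ m)
    (by
      rw [Preadditive.comp_sub, hsq1]
      rw [← Category.assoc, hs, ← Category.assoc, ← hc, Category.assoc, hm, sub_self])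
  have key2 : c' - σ ≫ γ = d ≫ βY := by
    apply aux_conf_epi F hcB
    rw [← Category.assoc, hd, Preadditive.comp_sub, Preadditive.sub_comp,
      ← hsq2, ← Category.assoc, hσ]
    congr 1
    rw [← ht]
    simp only [Category.assoc]
    rw [hγ]
  have hfγ : F.FactorsThruProj (f ≫ γ) := ⟨Q', m, βY, hQ', hγ.symm⟩
  have hcσγ : F.FactorsThruProj (c' - σ ≫ γ) := ⟨Q', d, βY, hQ', key2.symm⟩
  have hφσ : I.carrier (a₀ ≫ (φ ≫ σ)) := I.comp_right_mem (φ ≫ σ) ha₀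
  obtain ⟨h₀, hh₀⟩ := hpre.2 _ hφσ
  have key : a ≫ φ ≫ c' =
      a ≫ (φ ≫ (c' - σ ≫ γ)) + ((a - a₀) ≫ (φ ≫ σ ≫ γ) + h₀ ≫ (f ≫ γ)) := by
    simp only [Preadditive.comp_sub, Preadditive.sub_comp, Category.assoc,
      reassoc_of% hh₀]
    abel
  rw [key]
  exact aux_ftp_add F (aux_ftp_comp_left F a (aux_ftp_comp_left F φ hcσγ))
    (aux_ftp_add F (aux_ftp_comp_right F _ hst) (aux_ftp_comp_left F h₀ hfγ))

/-- Backward direction: stable right-orthogonality implies exact Ext-orthogonality. -/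
lemma aux_backward_orth (I : CatIdeal C) {Y B : C} {j : Y ⟶ B}
    (h : F.stRightOrth (F.stImage I.carrier) j) :
    F.toExactStructure.rightOrth I.carrier j := by
  intro A₀ A₁ a ha
  intro Z₂ W iB p i' p' gm hc1 hc2 hi hcomm
  obtain ⟨QY, κY, hQYinj, Y', βy, hcY⟩ := F.enough_injectives Y
  obtain ⟨QB, κB, hQBinj, B'', βb, hcBB⟩ := F.enough_injectives B
  obtain ⟨ι, hι⟩ := hQBinj κY ⟨Y', βy, hcY⟩ (j ≫ κB)
  obtain ⟨g'', hg'', -⟩ := F.toExactStructure.isCokernel hcY (ι ≫ βb)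
    (by rw [← Category.assoc, hι, Category.assoc, F.toExactStructure.comp_zero hcBB,
      comp_zero])
  obtain ⟨m, hm⟩ := hQYinj iB ⟨A₁, p, hc1⟩ κY
  obtain ⟨φ, hφ, -⟩ := F.toExactStructure.isCokernel hc1 (m ≫ βy)
    (by rw [← Category.assoc, hm, F.toExactStructure.comp_zero hcY])
  have hftp : F.FactorsThruProj (a ≫ φ ≫ g'') := by
    refine h a ⟨a, ha, ?_⟩ κY βy κB βb g'' ι
      ((F.projective_iff_injective QY).mpr hQYinj)
      ((F.projective_iff_injective QB).mpr hQBinj)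
      hcY hcBB hι hg''.symm φ
    show F.FactorsThruProj (a - a)
    rw [sub_self]; exact aux_ftp_zero F _ _
  obtain ⟨P₁, u₁, v₁, hP₁, huv₁⟩ := hftp
  obtain ⟨w₁, hw₁⟩ := hP₁ βb ⟨B, κB, hcBB⟩ v₁
  have hker : ((gm ≫ m ≫ ι) - p' ≫ (u₁ ≫ w₁)) ≫ βb = 0 := by
    simp only [Preadditive.sub_comp, Category.assoc]
    rw [hw₁, huv₁, ← hg'', ← reassoc_of% hφ, ← reassoc_of% hcomm, sub_self]
  obtain ⟨u, hu, -⟩ := F.toExactStructure.isKernel hcBB _ hker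
  refine ⟨u, ?_⟩
  apply aux_conf_mono F hcBB
  rw [Category.assoc, hu, Preadditive.comp_sub]
  have h1 : i' ≫ gm ≫ m ≫ ι = j ≫ κB := by
    rw [← Category.assoc, hi, ← Category.assoc, hm, hι]
  have h2 : i' ≫ p' ≫ (u₁ ≫ w₁) = 0 := by
    rw [← Category.assoc, F.toExactStructure.comp_zero hc2, zero_comp]
  rw [h1, h2, sub_zero]

end OrthProof
/-- `I` is special precovering in `A` iff `I/ω` is special
precovering in the triangulated stable category `A/ω`. -/
theorem stmt3 (F : FrobeniusCat C) (I : CatIdeal C)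
    (hω : ∀ P : C, F.toExactStructure.Projective P → I.carrier (𝟙 P)) :
    F.toExactStructure.SpecialPrecovering I.carrier ↔
      F.StSpecialPrecovering (F.stImage I.carrier) := by
  constructor
  · -- exact special precovering ⇒ stable special precovering
    intro hS A
    obtain ⟨A₀, f, hpre, K, A', K', i₁, p₁, i₂, g, hmap, hcA', hcf, hsq1', hsq2', -⟩ := hS A
    obtain ⟨P, π, hPproj, Ω, k, hcπ⟩ := F.enough_projectives A
    obtain ⟨t, ht⟩ := hPproj f ⟨K', i₂, hcf⟩ π
    obtain ⟨c, hcc, -⟩ := F.toExactStructure.isKernel hcf (k ≫ t)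
      (by rw [Category.assoc, ht, F.toExactStructure.comp_zero hcπ])
    refine ⟨A₀, f, ⟨⟨f, hpre.1, ?_⟩, ?_⟩,
      Ω, P, K', A₀, k, π, i₂, f, c, t, 𝟙 A₀, hcπ, hcf, hcc.symm, ht,
      ⟨𝟙 A₀, ?_, ?_⟩, ?_, aux_forward_orth F I hcf hpre hcπ hPproj ht hcc⟩
    · show F.FactorsThruProj (f - f)
      rw [sub_self]; exact aux_ftp_zero F _ _
    · rintro A'' f' ⟨f₀, hf₀, hstq⟩
      obtain ⟨h, hh⟩ := hpre.2 f₀ hf₀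
      refine ⟨h, ?_⟩
      show F.FactorsThruProj (h ≫ f - f')
      have : h ≫ f - f' = -(f' - f₀) := by rw [hh]; abel
      rw [this]; exact aux_ftp_neg F hstq
    · show F.FactorsThruProj (𝟙 A₀ ≫ 𝟙 A₀ - 𝟙 A₀)
      rw [Category.comp_id, sub_self]; exact aux_ftp_zero F _ _
    · show F.FactorsThruProj (𝟙 A₀ ≫ 𝟙 A₀ - 𝟙 A₀)
      rw [Category.comp_id, sub_self]; exact aux_ftp_zero F _ _
    · show F.FactorsThruProj (f - 𝟙 A₀ ≫ f)
      rw [Category.id_comp, sub_self]; exact aux_ftp_zero F _ _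
  · -- stable special precovering ⇒ exact special precovering
    intro hS Xobj
    obtain ⟨X, i, hipre, Y, Z, B, X₀, y, z, b, x, j, t, e, hcyz, hcbx, hsq1, hsq2,
      ⟨e', he1, he2⟩, hstq, horth⟩ := hS Xobj
    have hiI : I.carrier i := by
      obtain ⟨i₀, hi₀, hsti⟩ := hipre.1
      have hrw : i = i₀ + (i - i₀) := by abel
      rw [hrw]; exact I.add_mem hi₀ (aux_ftp_mem F I hω hsti)
    refine ⟨X₀, x, ⟨⟨?_, ?_⟩, Y, Z, B, y, z, b, j, t, hcyz, hcbx, hsq1, hsq2,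
      aux_backward_orth F I horth⟩⟩
    · -- x ∈ I
      have hrw : x = e ≫ i + (x - e ≫ i) := by abel
      rw [hrw]; exact I.add_mem (I.comp_left_mem e hiI) (aux_ftp_mem F I hω hstq)
    · -- x is an I-precover
      intro A'' f' hf'
      obtain ⟨h, hh⟩ := hipre.2 f' ⟨f', hf', by
        show F.FactorsThruProj (f' - f'); rw [sub_self]; exact aux_ftp_zero F _ _⟩
      have hδ : F.FactorsThruProj (f' - (h ≫ e') ≫ x) := by
        have key : f' - (h ≫ e') ≫ x =
            -(h ≫ i - f') + (-(h ≫ ((e' ≫ e - 𝟙 X) ≫ i)) + -(h ≫ (e' ≫ (x - e ≫ i)))) := by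
          simp only [Preadditive.sub_comp, Preadditive.comp_sub, Preadditive.add_comp,
            Preadditive.comp_add, Category.assoc, Category.id_comp]
          abel
        rw [key]
        exact aux_ftp_add F (aux_ftp_neg F hh)
          (aux_ftp_add F (aux_ftp_neg F (aux_ftp_comp_left F h (aux_ftp_comp_right F i he2)))
            (aux_ftp_neg F (aux_ftp_comp_left F h (aux_ftp_comp_left F e' hstq))))
      obtain ⟨w, hw⟩ := aux_ftp_lift F hδ ⟨B, b, hcbx⟩
      refine ⟨h ≫ e' + w, ?_⟩
      rw [Preadditive.add_comp, hw]
      abel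
end

section
/- Let A be a Frobenius category with ω its subcategory of projectives, and let J be an ideal of A with ω ⊆ Ob(J). Then J is a special preenveloping ideal in A if and only if J/ω is a special preenveloping ideal in the triangulated stable category A/ω. -/
open CategoryTheory CategoryTheory.Limits

universe w v u

variable {C : Type u} [Category.{v} C] [Preadditive C]

section AuxStmt4

variable {C : Type u} [Category.{v} C] [Preadditive C]

namespace ExactStructure

variable (E : ExactStructure C)

lemma conf_desc' {X Y Z W : C} {i : X ⟶ Y} {p : Y ⟶ Z} (h : E.IsConflation i p)
    (g : Y ⟶ W) (hg : i ≫ g = 0) : ∃ k : Z ⟶ W, p ≫ k = g :=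
  (E.isCokernel h g hg).exists

lemma conf_lift' {X Y Z W : C} {i : X ⟶ Y} {p : Y ⟶ Z} (h : E.IsConflation i p)
    (g : W ⟶ Y) (hg : g ≫ p = 0) : ∃ k : W ⟶ X, k ≫ i = g :=
  (E.isKernel h g hg).exists

lemma conf_epi' {X Y Z W : C} {i : X ⟶ Y} {p : Y ⟶ Z} (h : E.IsConflation i p)
    {x y : Z ⟶ W} (hxy : p ≫ x = p ≫ y) : x = y := by
  have h0 : i ≫ (p ≫ x) = 0 := by rw [← Category.assoc, E.comp_zero h, zero_comp]
  obtain ⟨k, hk, huniq⟩ := E.isCokernel h (p ≫ x) h0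
  rw [huniq x rfl, huniq y hxy.symm]

lemma conf_mono' {X Y Z W : C} {i : X ⟶ Y} {p : Y ⟶ Z} (h : E.IsConflation i p)
    {x y : W ⟶ X} (hxy : x ≫ i = y ≫ i) : x = y := by
  have h0 : (x ≫ i) ≫ p = 0 := by rw [Category.assoc, E.comp_zero h, Limits.comp_zero]
  obtain ⟨k, hk, huniq⟩ := E.isKernel h (x ≫ i) h0
  rw [huniq x rfl, huniq y hxy.symm]

end ExactStructure

namespace FrobeniusCat

variable (F : FrobeniusCat C)

lemma ftp_zero (X Y : C) : F.FactorsThruProj (0 : X ⟶ Y) := by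
  obtain ⟨P, p, hP, _⟩ := F.enough_projectives Y
  exact ⟨P, 0, p, hP, zero_comp⟩

lemma stEq_refl {X Y : C} (f : X ⟶ Y) : F.StEq f f := by
  show F.FactorsThruProj (f - f)
  rw [sub_self]; exact F.ftp_zero X Y

lemma ftp_neg {X Y : C} {f : X ⟶ Y} (h : F.FactorsThruProj f) : F.FactorsThruProj (-f) := by
  obtain ⟨P, u, v, hP, huv⟩ := h
  exact ⟨P, u, -v, hP, by rw [Preadditive.comp_neg, huv]⟩

lemma ftp_add {X Y : C} {f g : X ⟶ Y} (hf : F.FactorsThruProj f) (hg : F.FactorsThruProj g) :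
    F.FactorsThruProj (f + g) := by
  obtain ⟨P₁, u₁, v₁, hP₁, h₁⟩ := hf
  obtain ⟨P₂, u₂, v₂, hP₂, h₂⟩ := hg
  obtain ⟨P, ρ, hP, hdef⟩ := F.enough_projectives Y
  obtain ⟨w₁, hw₁⟩ := hP₁ ρ hdef v₁
  obtain ⟨w₂, hw₂⟩ := hP₂ ρ hdef v₂
  refine ⟨P, u₁ ≫ w₁ + u₂ ≫ w₂, ρ, hP, ?_⟩
  rw [Preadditive.add_comp, Category.assoc, Category.assoc, hw₁, hw₂, h₁, h₂]

lemma ftp_comp_right {X Y Z : C} {f : X ⟶ Y} (e : Y ⟶ Z) (h : F.FactorsThruProj f) :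
    F.FactorsThruProj (f ≫ e) := by
  obtain ⟨P, u, v, hP, huv⟩ := h
  exact ⟨P, u, v ≫ e, hP, by rw [← Category.assoc, huv]⟩

variable {J : CatIdeal C}

lemma mem_of_ftp (hω : ∀ P : C, F.toExactStructure.Projective P → J.carrier (𝟙 P))
    {X Y : C} {f : X ⟶ Y} (h : F.FactorsThruProj f) : J.carrier f := by
  obtain ⟨P, u, v, hP, huv⟩ := h
  have h1 : J.carrier ((𝟙 P) ≫ v) := J.comp_right_mem v (hω P hP)
  rw [Category.id_comp] at h1
  have h2 := J.comp_left_mem u h1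
  rwa [huv] at h2

lemma mem_of_stEq (hω : ∀ P : C, F.toExactStructure.Projective P → J.carrier (𝟙 P))
    {X Y : C} {f g : X ⟶ Y} (hg : J.carrier g) (h : F.StEq f g) :
    J.carrier f := by
  have h1 : J.carrier (f - g) := F.mem_of_ftp hω h
  have h2 := J.add_mem hg h1
  rwa [add_sub_cancel] at h2

lemma mem_of_stImage (hω : ∀ P : C, F.toExactStructure.Projective P → J.carrier (𝟙 P))
    {X Y : C} {f : X ⟶ Y} (h : F.stImage J.carrier f) : J.carrier f := by
  obtain ⟨g, hg, hfg⟩ := h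
  exact F.mem_of_stEq hω hg hfg

lemma stImage_of_mem {X Y : C} {f : X ⟶ Y} (h : J.carrier f) : F.stImage J.carrier f :=
  ⟨f, h, F.stEq_refl f⟩

/-- Key lemma: stable orthogonality implies Ext-orthogonality. -/
lemma extOrth_of_stOrth {A₀ A₁ B₀ B₁ : C} {a : A₀ ⟶ A₁} {b : B₀ ⟶ B₁}
    (hst : F.StOrth a b) : F.toExactStructure.ExtOrth a b := by
  intro Z W i p i' p' g hip hi'p' hig hcomm
  obtain ⟨Q₀, αB, hQ₀inj, hinflB⟩ := F.enough_injectives B₀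
  obtain ⟨B'', βB, hconfB⟩ := hinflB
  obtain ⟨Q₁, αY, hQ₁inj, hinflY⟩ := F.enough_injectives B₁
  obtain ⟨Y'', βY, hconfY⟩ := hinflY
  have hQ₀proj : F.toExactStructure.Projective Q₀ := (F.projective_iff_injective Q₀).mpr hQ₀inj
  have hQ₁proj : F.toExactStructure.Projective Q₁ := (F.projective_iff_injective Q₁).mpr hQ₁inj
  obtain ⟨ι, hι⟩ := hQ₁inj αB ⟨_, _, hconfB⟩ (b ≫ αY)
  obtain ⟨g'', hg''⟩ := F.toExactStructure.conf_desc' hconfB (ι ≫ βY) (by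
    rw [← Category.assoc, hι, Category.assoc, F.toExactStructure.comp_zero hconfY, comp_zero])
  obtain ⟨s, hs⟩ := hQ₀inj i ⟨_, _, hip⟩ αB
  obtain ⟨φ, hφ⟩ := F.toExactStructure.conf_desc' hip (s ≫ βB) (by
    rw [← Category.assoc, hs, F.toExactStructure.comp_zero hconfB])
  obtain ⟨P₀, u₀, v₀, hP₀, h₀⟩ :=
    hst αB βB αY βY g'' ι hQ₀proj hQ₁proj hconfB hconfY hι hg''.symm φ
  obtain ⟨v₁, hv₁⟩ := hP₀ βY ⟨_, _, hconfY⟩ v₀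
  have hm : i' ≫ (g ≫ s ≫ ι) = b ≫ αY := by
    rw [← Category.assoc, ← Category.assoc, hig, Category.assoc, ← Category.assoc, hs, hι]
  have hmβ : (g ≫ s ≫ ι) ≫ βY = p' ≫ u₀ ≫ v₀ := by
    rw [h₀]
    simp only [Category.assoc]
    rw [← hg'', ← Category.assoc s βB, ← hφ]
    simp only [← Category.assoc]
    rw [← hcomm]
  have hm'β : (g ≫ s ≫ ι - p' ≫ u₀ ≫ v₁) ≫ βY = 0 := by
    rw [Preadditive.sub_comp, hmβ, Category.assoc, Category.assoc, hv₁, sub_self]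
  obtain ⟨u, hu⟩ := F.toExactStructure.conf_lift' hconfY _ hm'β
  refine ⟨u, F.toExactStructure.conf_mono' hconfY ?_⟩
  rw [Category.assoc, hu, Preadditive.comp_sub, hm, ← Category.assoc,
    F.toExactStructure.comp_zero hi'p', zero_comp, sub_zero]

end FrobeniusCat

end AuxStmt4

/-- `J` is special preenveloping in `A` iff `J/ω` is special
preenveloping in the triangulated stable category `A/ω`. -/
theorem stmt4 (F : FrobeniusCat C) (J : CatIdeal C)
    (hω : ∀ P : C, F.toExactStructure.Projective P → J.carrier (𝟙 P)) :
    F.toExactStructure.SpecialPreenveloping J.carrier ↔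
      F.StSpecialPreenveloping (F.stImage J.carrier) := by
  constructor
  · -- exact special preenveloping ⇒ stable special preenveloping
    intro hsp X
    obtain ⟨B, j, ⟨⟨hJj, henv⟩, V, Z, W, q, z, w, t, h, hjq, hzw, hjt, htw, horth⟩⟩ := hsp X
    -- (∗): every J-morphism out of X extends along j
    have star : ∀ {B₁' : C} (c : X ⟶ B₁'), J.carrier c → ∃ u : B ⟶ B₁', j ≫ u = c := by
      intro B₁' c hc
      exact horth c hc z w j q t hzw hjq hjt htw.symm
    obtain ⟨QX, z', hQXinj, hinfl⟩ := F.enough_injectives X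
    obtain ⟨SX, w', hz'w'⟩ := hinfl
    have hQXproj : F.toExactStructure.Projective QX :=
      (F.projective_iff_injective QX).mpr hQXinj
    obtain ⟨t', ht'⟩ := hQXinj j ⟨_, _, hjq⟩ z'
    obtain ⟨h', hh'⟩ := F.toExactStructure.conf_desc' hjq (t' ≫ w') (by
      rw [← Category.assoc, ht', F.toExactStructure.comp_zero hz'w'])
    refine ⟨B, j, ⟨F.stImage_of_mem hJj, ?_⟩,
      B, V, QX, SX, j, q, z', w', t', h', 𝟙 B, hjq, hz'w', ht', hh'.symm,
      ⟨𝟙 B, by simpa using F.stEq_refl (𝟙 B), by simpa using F.stEq_refl (𝟙 B)⟩,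
      by simpa using F.stEq_refl j, ?_⟩
    · -- stable preenvelope property
      intro B' f' hf'
      obtain ⟨h₀, hh₀⟩ := henv f' (F.mem_of_stImage hω hf')
      exact ⟨h₀, by rw [hh₀]; exact F.stEq_refl f'⟩
    · -- stable left orthogonality of h'
      intro B₀' B₁' b' hb'
      have hb'J : J.carrier b' := F.mem_of_stImage hω hb'
      intro P B'' Q Y'' αB βB αY βY g'' ι hPproj hQproj hconfB hconfY hmod1 hmod2 φ
      obtain ⟨ψ, hψ⟩ := hQXproj βB ⟨_, _, hconfB⟩ (w' ≫ φ)
      obtain ⟨θ, hθ⟩ := F.toExactStructure.conf_lift' hconfB (z' ≫ ψ) (by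
        rw [Category.assoc, hψ, ← Category.assoc,
          F.toExactStructure.comp_zero hz'w', zero_comp])
      obtain ⟨u, hu⟩ := star (θ ≫ b') (J.comp_left_mem θ hb'J)
      have hjδ : j ≫ (t' ≫ ψ ≫ ι - u ≫ αY) = 0 := by
        simp only [Preadditive.comp_sub, ← Category.assoc, ht', hu]
        rw [← hθ]
        simp only [Category.assoc]
        rw [hmod1, sub_self]
      obtain ⟨σ, hσ⟩ := F.toExactStructure.conf_desc' hjq _ hjδ
      refine ⟨Q, σ, βY, hQproj, F.toExactStructure.conf_epi' hjq ?_⟩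
      rw [← Category.assoc, hσ, ← Category.assoc q h', hh']
      simp only [Preadditive.sub_comp, Category.assoc, hmod2,
        F.toExactStructure.comp_zero hconfY, comp_zero, sub_zero]
      rw [← Category.assoc ψ βB, hψ]
      simp only [Category.assoc]
  · -- stable special preenveloping ⇒ exact special preenveloping
    intro hsp X
    obtain ⟨Bj, j, ⟨hstJj, hstenv⟩, B₀, V, Z, W, b, q, z, w, t, h, e, hbq, hzw, hbt, htw,
      ⟨e', he1, he2⟩, hbe, horth⟩ := hsp X
    have hJj : J.carrier j := F.mem_of_stImage hω hstJj
    have hJbe : J.carrier (b ≫ e) := F.mem_of_stEq hω hJj hbe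
    have hJb : J.carrier b := by
      have h1 : J.carrier (b ≫ (e ≫ e')) := by
        have := J.comp_right_mem e' hJbe
        rwa [Category.assoc] at this
      have h2 : J.carrier (𝟙 B₀ - e ≫ e') := by
        have := F.mem_of_ftp hω (F.ftp_neg he1)
        rwa [neg_sub] at this
      have h3 := J.add_mem h1 (J.comp_left_mem b h2)
      rwa [← Preadditive.comp_add, add_sub_cancel, Category.comp_id] at h3
    refine ⟨B₀, b, ⟨hJb, ?_⟩, V, Z, W, q, z, w, t, h, hbq, hzw, hbt, htw, ?_⟩
    · -- honest preenvelope property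
      intro B'' f' hf'
      obtain ⟨h₀, hh₀⟩ := hstenv f' (F.stImage_of_mem hf')
      have hd : F.FactorsThruProj (f' - b ≫ (e ≫ h₀)) := by
        have h1 : F.FactorsThruProj (f' - j ≫ h₀) := by
          have := F.ftp_neg hh₀
          rwa [neg_sub] at this
        have h2 : F.FactorsThruProj ((b ≫ e - j) ≫ h₀) := F.ftp_comp_right h₀ hbe
        have h3 := F.ftp_add h1 (F.ftp_neg h2)
        have heq : f' - j ≫ h₀ + -((b ≫ e - j) ≫ h₀) = f' - b ≫ (e ≫ h₀) := by
          rw [Preadditive.sub_comp, ← Category.assoc]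
          abel
        rwa [heq] at h3
      obtain ⟨P, u, v, hP, huv⟩ := hd
      have hPinj : F.toExactStructure.Injective P := (F.projective_iff_injective P).mp hP
      obtain ⟨u'2, hu'2⟩ := hPinj b ⟨_, _, hbq⟩ u
      refine ⟨e ≫ h₀ + u'2 ≫ v, ?_⟩
      rw [Preadditive.comp_add, ← Category.assoc b u'2, hu'2, huv]
      abel
    · -- left orthogonality
      intro B₀' B₁' b' hb'
      exact F.extOrth_of_stOrth (horth b' (F.stImage_of_mem hb'))
end

section
/- Let T be a triangulated category and I an ideal of T. Then the following are equivalent: (a) I is a special precovering ideal in T; (b) I is a precovering ideal in T; (c) (I, I^⊥) is a complete ideal cotorsion pair in T. In particular, every precovering ideal in a triangulated category is special precovering. -/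
/-!
Complete an `I`-precover `i : X ⟶ A` to a distinguished triangle `B ⟶ X ⟶ A ⟶ B⟦1⟧`
with third morphism `w`. Every morphism of `I` into `A` factors through `i` and `i ≫ w = 0`,
so `w` kills `I`; hence its desuspension `j : A⟦-1⟧ ⟶ B` lies in `I^⊥`, and the triangle
`A⟦-1⟧ ⟶ 0 ⟶ A ⟶ A⟦-1⟧⟦1⟧` mapped along `j` exhibits `i` as a special precover.
Testing `a ∈ ^⊥(I^⊥)` against this `j` gives `a ≫ w = 0`, so `a` factors through `i`.
Dually, an `I`-precover `E ⟶ X⟦1⟧`, used as the third morphism of a triangle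
`X ⟶ B ⟶ E ⟶ X⟦1⟧`, makes `X ⟶ B` a special `I^⊥`-preenvelope.
-/

open CategoryTheory CategoryTheory.Limits

universe w v u

variable {C : Type u} [Category.{v} C] [Preadditive C]

section Triangulated

open Pretriangulated

variable {T : Type u} [Category.{v} T] [Preadditive T] [HasZeroObject T]
  [HasShift T ℤ] [∀ n : ℤ, Functor.Additive (shiftFunctor T n)] [Pretriangulated T]

/-- Left orthogonality `f ⊥ g` in a triangulated category:
`g[1] ∘ φ ∘ f = 0` for all `φ : A ⟶ B[1]`. -/
def TOrth {X A B Y : T} (f : X ⟶ A) (g : B ⟶ Y) : Prop :=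
  ∀ φ : A ⟶ B⟦(1 : ℤ)⟧, f ≫ φ ≫ g⟦(1 : ℤ)⟧' = 0

def tRightOrth (S : MorClass T) : MorClass T :=
  fun _ _ b => ∀ ⦃A₀ A₁ : T⦄ (a : A₀ ⟶ A₁), S a → TOrth a b

def tLeftOrth (S : MorClass T) : MorClass T :=
  fun _ _ a => ∀ ⦃B₀ B₁ : T⦄ (b : B₀ ⟶ B₁), S b → TOrth a b

/-- A special `S`-precover in a triangulated category: an `S`-precover `i`
fitting in a homotopy pushout diagram of distinguished triangles
`Y → Z → A → Y[1]` over `B → X → A → B[1]` with connecting morphism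
`j : Y ⟶ B` in `S^⊥`. -/
def TIsSpecialPrecover (S : MorClass T) {X A : T} (i : X ⟶ A) : Prop :=
  IsPrecover S i ∧
  ∃ (Y Z B : T) (u : Y ⟶ Z) (v : Z ⟶ A) (w : A ⟶ Y⟦(1 : ℤ)⟧)
    (u' : B ⟶ X) (w' : A ⟶ B⟦(1 : ℤ)⟧) (j : Y ⟶ B) (t : Z ⟶ X),
    (Triangle.mk u v w ∈ distTriang T) ∧ (Triangle.mk u' i w' ∈ distTriang T) ∧
    u ≫ t = j ≫ u' ∧ t ≫ i = v ∧ w ≫ j⟦(1 : ℤ)⟧' = w' ∧ tRightOrth S j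

def TSpecialPrecovering (S : MorClass T) : Prop :=
  ∀ A : T, ∃ (X : T) (i : X ⟶ A), TIsSpecialPrecover S i

/-- A special `S`-preenvelope in a triangulated category (dual notion). -/
def TIsSpecialPreenvelope (S : MorClass T) {X B : T} (j : X ⟶ B) : Prop :=
  IsPreenvelope S j ∧
  ∃ (V Z W : T) (q : B ⟶ V) (δ : V ⟶ X⟦(1 : ℤ)⟧) (z : X ⟶ Z) (w : Z ⟶ W)
    (δ' : W ⟶ X⟦(1 : ℤ)⟧) (t : B ⟶ Z) (h : V ⟶ W),
    (Triangle.mk j q δ ∈ distTriang T) ∧ (Triangle.mk z w δ' ∈ distTriang T) ∧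
    j ≫ t = z ∧ q ≫ h = t ≫ w ∧ h ≫ δ' = δ ∧ tLeftOrth S h

def TSpecialPreenveloping (S : MorClass T) : Prop :=
  ∀ X : T, ∃ (B : T) (j : X ⟶ B), TIsSpecialPreenvelope S j

end Triangulated

theorem IsPrecover.comp_eq_zero_of_mem {S : MorClass C} {X A Y : C} {i : X ⟶ A}
    (hi : IsPrecover S i) {w : A ⟶ Y} (hw : i ≫ w = 0) {A₀ : C} {c : A₀ ⟶ A} (hc : S c) :
    c ≫ w = 0 := by
  obtain ⟨h, rfl⟩ := hi.2 c hc
  rw [Category.assoc, hw, comp_zero]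

section Desuspension

variable {T : Type u} [Category.{v} T] [HasShift T ℤ]

noncomputable def desuspend {A B : T} (w : A ⟶ B⟦(1 : ℤ)⟧) : A⟦(-1 : ℤ)⟧ ⟶ B :=
  (shiftFunctor T (1 : ℤ)).preimage ((shiftNegShift A (1 : ℤ)).hom ≫ w)

theorem desuspend_shift {A B : T} (w : A ⟶ B⟦(1 : ℤ)⟧) :
    (desuspend w)⟦(1 : ℤ)⟧' = (shiftNegShift A (1 : ℤ)).hom ≫ w :=
  Functor.map_preimage _ _

end Desuspension

section Orthogonality

variable {T : Type u} [Category.{v} T] [Preadditive T] [HasShift T ℤ]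

theorem mem_tLeftOrth_tRightOrth {S : MorClass T} {A₀ A₁ : T} {a : A₀ ⟶ A₁} (ha : S a) :
    tLeftOrth (tRightOrth S) a :=
  fun _ _ _ hb => hb _ ha

theorem mem_tRightOrth_iff (I : CatIdeal T) {Y B : T} (j : Y ⟶ B) :
    tRightOrth I.carrier j ↔
      ∀ ⦃A₀ : T⦄ (c : A₀ ⟶ Y⟦(1 : ℤ)⟧), I.carrier c → c ≫ j⟦(1 : ℤ)⟧' = 0 := by
  refine ⟨fun hj _ c hc => by simpa using hj c hc (𝟙 _), fun hj _ _ a ha φ => ?_⟩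
  simpa using hj (a ≫ φ) (I.comp_right_mem φ ha)

theorem desuspend_mem_tRightOrth (I : CatIdeal T) {X A B : T} {i : X ⟶ A}
    (hi : IsPrecover I.carrier i) {w : A ⟶ B⟦(1 : ℤ)⟧} (hw : i ≫ w = 0) :
    tRightOrth I.carrier (desuspend w) := by
  refine (mem_tRightOrth_iff I _).2 fun _ c hc => ?_
  rw [desuspend_shift, ← Category.assoc]
  exact hi.comp_eq_zero_of_mem hw (I.comp_right_mem _ hc)

end Orthogonality

section Triangulated

open Pretriangulated ZeroObject

variable {T : Type u} [Category.{v} T] [Preadditive T] [HasZeroObject T]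
  [HasShift T ℤ] [∀ n : ℤ, Functor.Additive (shiftFunctor T n)] [Pretriangulated T]

theorem TSpecialPrecovering.precovering {S : MorClass T} (h : TSpecialPrecovering S) :
    Precovering S := fun A =>
  let ⟨X, i, hi⟩ := h A
  ⟨X, i, hi.1⟩

theorem yoneda_exact₁_of_distTriang (Δ : Triangle T) (hΔ : Δ ∈ distTriang T) {X : T}
    (f : Δ.obj₁ ⟶ X) (hf : Δ.mor₃ ≫ f⟦(1 : ℤ)⟧' = 0) : ∃ g : Δ.obj₂ ⟶ X, f = Δ.mor₁ ≫ g := by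
  obtain ⟨g, hg⟩ : ∃ g : Δ.obj₂⟦(1 : ℤ)⟧ ⟶ X⟦(1 : ℤ)⟧, f⟦(1 : ℤ)⟧' = (-Δ.mor₁⟦(1 : ℤ)⟧') ≫ g :=
    Triangle.yoneda_exact₃ _ (rot_of_distTriang _ hΔ) (f⟦(1 : ℤ)⟧') hf
  refine ⟨-(shiftFunctor T (1 : ℤ)).preimage g, (shiftFunctor T (1 : ℤ)).map_injective ?_⟩
  simpa using hg

theorem zero_obj₂_distinguished {Y A : T} (e : A ≅ Y⟦(1 : ℤ)⟧) :
    Triangle.mk (0 : Y ⟶ 0) (0 : 0 ⟶ A) e.hom ∈ distTriang T :=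
  isomorphic_distinguished _ (contractible_distinguished₂ Y) _
    (Triangle.isoMk _ _ (Iso.refl _) (Iso.refl _) e (by simp [Triangle.mk]) (by simp [Triangle.mk])
      (by simp [Triangle.mk]))

theorem IsPrecover.tIsSpecialPrecover (I : CatIdeal T) {X A : T} {i : X ⟶ A}
    (hi : IsPrecover I.carrier i) : TIsSpecialPrecover I.carrier i := by
  obtain ⟨B, u', w', hΔ⟩ := distinguished_cocone_triangle₁ i
  refine ⟨hi, A⟦(-1 : ℤ)⟧, 0, B, 0, 0, (shiftNegShift A (1 : ℤ)).inv, u', w', desuspend w', 0,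
    zero_obj₂_distinguished (shiftNegShift A (1 : ℤ)).symm, hΔ, ?_, by simp, ?_,
    desuspend_mem_tRightOrth I hi (comp_distTriang_mor_zero₂₃ _ hΔ)⟩
  · have hwu : w' ≫ u'⟦(1 : ℤ)⟧' = 0 := comp_distTriang_mor_zero₃₁ _ hΔ
    have hju : desuspend w' ≫ u' = 0 := (shiftFunctor T (1 : ℤ)).map_injective (by
      rw [Functor.map_comp, desuspend_shift, Category.assoc, hwu, comp_zero, Functor.map_zero])
    rw [hju, comp_zero]
  · rw [desuspend_shift, Iso.inv_hom_id_assoc]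

theorem Precovering.tSpecialPrecovering (I : CatIdeal T) (h : Precovering I.carrier) :
    TSpecialPrecovering I.carrier := fun A =>
  let ⟨X, i, hi⟩ := h A
  ⟨X, i, hi.tIsSpecialPrecover I⟩

theorem Precovering.mem_of_mem_tLeftOrth_tRightOrth (I : CatIdeal T) (h : Precovering I.carrier)
    {A₀ A₁ : T} {a : A₀ ⟶ A₁} (ha : tLeftOrth (tRightOrth I.carrier) a) : I.carrier a := by
  obtain ⟨X, i, hi⟩ := h A₁
  obtain ⟨B, u', w', hΔ⟩ := distinguished_cocone_triangle₁ i
  have hw : i ≫ w' = 0 := comp_distTriang_mor_zero₂₃ _ hΔ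
  have haw : a ≫ w' = 0 := by
    simpa [desuspend_shift] using
      ha _ (desuspend_mem_tRightOrth I hi hw) (shiftNegShift A₁ (1 : ℤ)).inv
  obtain ⟨g, rfl⟩ := Triangle.coyoneda_exact₃ _ hΔ a haw
  exact I.comp_left_mem g hi.1

theorem IsPrecover.tIsSpecialPreenvelope (I : CatIdeal T) {X B E : T} {i : E ⟶ X⟦(1 : ℤ)⟧}
    (hi : IsPrecover I.carrier i) {j : X ⟶ B} {q : B ⟶ E}
    (hΔ : Triangle.mk j q i ∈ distTriang T) : TIsSpecialPreenvelope (tRightOrth I.carrier) j := by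
  have hj : tRightOrth I.carrier j := (mem_tRightOrth_iff I j).2 fun _ _ hc =>
    hi.comp_eq_zero_of_mem (comp_distTriang_mor_zero₃₁ _ hΔ) hc
  have hpre : IsPreenvelope (tRightOrth I.carrier) j := by
    refine ⟨hj, fun _ j' hj' => ?_⟩
    have hij' : i ≫ j'⟦(1 : ℤ)⟧' = 0 := (mem_tRightOrth_iff I j').1 hj' i hi.1
    obtain ⟨g, hg⟩ := yoneda_exact₁_of_distTriang _ hΔ j' hij'
    exact ⟨g, hg.symm⟩
  refine ⟨hpre, E, 0, X⟦(1 : ℤ)⟧, q, i, 0, 0, 𝟙 _, 0, i, hΔ, contractible_distinguished₂ X,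
    by simp, ?_, by simp, mem_tLeftOrth_tRightOrth hi.1⟩
  have hqi : q ≫ i = 0 := comp_distTriang_mor_zero₂₃ _ hΔ
  simpa using hqi

theorem Precovering.tSpecialPreenveloping_tRightOrth (I : CatIdeal T) (h : Precovering I.carrier) :
    TSpecialPreenveloping (tRightOrth I.carrier) := fun X =>
  let ⟨_, _, hi⟩ := h (X⟦(1 : ℤ)⟧)
  let ⟨B, j, _, hΔ⟩ := distinguished_cocone_triangle₂ _
  ⟨B, j, hi.tIsSpecialPreenvelope I hΔ⟩

/-- for an ideal `I` of a triangulated category: (a) `I` special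
precovering ↔ (b) `I` precovering ↔ (c) `(I, I^⊥)` a complete ideal cotorsion
pair; in particular every precovering ideal is special precovering. -/
theorem stmt13 (I : CatIdeal T) :
    (TSpecialPrecovering I.carrier ↔ Precovering I.carrier) ∧
    (Precovering I.carrier ↔
      (I.carrier = tLeftOrth (tRightOrth I.carrier) ∧
       TSpecialPrecovering I.carrier ∧
       TSpecialPreenveloping (tRightOrth I.carrier))) := by
  refine ⟨⟨TSpecialPrecovering.precovering, Precovering.tSpecialPrecovering I⟩,
    fun h => ⟨?_, h.tSpecialPrecovering I, h.tSpecialPreenveloping_tRightOrth I⟩,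
    fun h => h.2.1.precovering⟩
  funext A₀ A₁ a
  exact propext ⟨mem_tLeftOrth_tRightOrth, h.mem_of_mem_tLeftOrth_tRightOrth I⟩

end Triangulated
end
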